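/- Let S ⊆ Z_p be a finite set and α, β ∈ Z_p with α ∉ S. Then there is a pReLU-network of width 2 computing a function f : Z_p → Z_p such that f(α) = β and f(x) = x for all x ∈ S. -/

import Mathlib

open scoped Classical

noncomputable def pReLU (p : ℕ) [Fact p.Prime] (x : ℚ_[p]) : ℚ_[p] :=
  if ‖x‖ ≤ 1 then x else 0

/-- A `pReLU`-network of width `w`, input dimension `a`, output dimension `b`:
an alternating composition of affine maps (hidden dimensions `≤ w`) and
coordinatewise `pReLU` activations, starting and ending with an affine map. -/
inductive IsPReLUNet (p : ℕ) [Fact p.Prime] (w : ℕ) : (a b : ℕ) →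
    ((Fin a → ℚ_[p]) → (Fin b → ℚ_[p])) → Prop
  | affine (a b : ℕ) (A : Matrix (Fin b) (Fin a) ℚ_[p]) (c : Fin b → ℚ_[p]) :
      IsPReLUNet p w a b (fun x => A.mulVec x + c)
  | step (a b c : ℕ) (hb : b ≤ w) (f : (Fin a → ℚ_[p]) → (Fin b → ℚ_[p]))
      (A : Matrix (Fin c) (Fin b) ℚ_[p]) (d : Fin c → ℚ_[p])
      (hf : IsPReLUNet p w a b f) :
      IsPReLUNet p w a c (fun x => A.mulVec (fun i => pReLU p (f x i)) + d)

/-! The network is `x ↦ x + (β - α) · pReLU ((x - α) / c + 1)` with `c = p ^ n` so small that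
`‖c‖ < ‖s - α‖` for every `s ∈ S`. At `x = α` the `pReLU` term is `pReLU 1 = 1`, while for
`x = s ∈ S` its argument has norm `‖s - α‖ / ‖c‖ > 1` by the ultrametric inequality, so it
vanishes. The first `pReLU` neuron carries `x` through unchanged since `x ∈ ℤ_[p]`. -/

section

variable {p : ℕ} [Fact p.Prime]

theorem pReLU_of_norm_le_one {x : ℚ_[p]} (hx : ‖x‖ ≤ 1) : pReLU p x = x := if_pos hx

theorem pReLU_of_one_lt_norm {x : ℚ_[p]} (hx : 1 < ‖x‖) : pReLU p x = 0 := if_neg hx.not_ge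

theorem norm_pReLU_le_one (x : ℚ_[p]) : ‖pReLU p x‖ ≤ 1 := by
  unfold pReLU
  split_ifs with hx
  · exact hx
  · simp

theorem pReLU_coe (x : ℤ_[p]) : pReLU p x = x :=
  pReLU_of_norm_le_one (PadicInt.padic_norm_e_of_padicInt x ▸ x.norm_le_one)

theorem pReLU_div_add_one_eq_zero {x c : ℚ_[p]} (hc : c ≠ 0) (hcx : ‖c‖ < ‖x‖) :
    pReLU p (x / c + 1) = 0 := by
  have hxc : 1 < ‖x / c‖ := by
    rw [norm_div, one_lt_div (norm_pos_iff.2 hc)]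
    exact hcx
  apply pReLU_of_one_lt_norm
  rwa [Padic.add_eq_max_of_ne (by rw [norm_one]; exact hxc.ne'), norm_one,
    max_eq_left hxc.le]

theorem isPReLUNet_pReLU_add_mul_pReLU (γ a b : ℚ_[p]) :
    IsPReLUNet p 2 1 1 fun x _ => pReLU p (x 0) + γ * pReLU p (a * x 0 + b) := by
  convert IsPReLUNet.step 1 2 1 le_rfl _ (Matrix.of ![![1, γ]]) 0
    (IsPReLUNet.affine 1 2 (Matrix.of ![![1], ![a]]) ![0, b]) using 1
  funext x i
  simp [dotProduct, Fin.sum_univ_two]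

theorem exists_norm_lt_norm_sub (S : Finset ℤ_[p]) {α : ℤ_[p]} (hα : α ∉ S) :
    ∃ c : ℚ_[p], c ≠ 0 ∧ ∀ s ∈ S, ‖c‖ < ‖(s - α : ℚ_[p])‖ := by
  have hlim : Filter.Tendsto (fun n : ℕ => ‖(p : ℚ_[p]) ^ n‖) Filter.atTop (nhds 0) := by
    simpa using (tendsto_pow_atTop_nhds_zero_of_norm_lt_one (Padic.norm_p_lt_one (p := p))).norm
  have hpow : ∀ s ∈ S, ∀ᶠ n in Filter.atTop, ‖(p : ℚ_[p]) ^ n‖ < ‖(s - α : ℚ_[p])‖ := by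
    intro s hs
    have hsα : (s - α : ℚ_[p]) ≠ 0 := sub_ne_zero.2 fun h => hα (Subtype.ext h ▸ hs)
    exact hlim.eventually_lt_const (norm_pos_iff.2 hsα)
  obtain ⟨n, hn⟩ := ((Filter.eventually_all_finset S).2 hpow).exists
  exact ⟨(p : ℚ_[p]) ^ n, pow_ne_zero n (Nat.cast_ne_zero.2 (Fact.out : p.Prime).ne_zero), hn⟩

end

theorem interpolate_one_point (p : ℕ) [Fact p.Prime]
    (S : Finset ℤ_[p]) (α β : ℤ_[p]) (hα : α ∉ S) :
    ∃ (f : ℤ_[p] → ℤ_[p]) (F : (Fin 1 → ℚ_[p]) → (Fin 1 → ℚ_[p])),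
      IsPReLUNet p 2 1 1 F ∧
      (∀ x : ℤ_[p], F (fun _ => (x : ℚ_[p])) = fun _ => (f x : ℚ_[p])) ∧
      f α = β ∧ ∀ x ∈ S, f x = x := by
  obtain ⟨c, hc, hcS⟩ := exists_norm_lt_norm_sub S hα
  let bump : ℤ_[p] → ℤ_[p] := fun x =>
    ⟨pReLU p ((x - α) / c + 1), norm_pReLU_le_one _⟩
  refine ⟨fun x => x + (β - α) * bump x, _,
    isPReLUNet_pReLU_add_mul_pReLU (β - α) c⁻¹ (1 - α / c), fun x => ?_, ?_, fun s hs => ?_⟩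
  · funext
    simp only [pReLU_coe, PadicInt.coe_add, PadicInt.coe_sub, bump]
    congr 3
    ring
  · have hbumpα : bump α = 1 := Subtype.ext (by simp [bump, pReLU_of_norm_le_one])
    simp [hbumpα]
  · have hbumps : bump s = 0 := Subtype.ext (pReLU_div_add_one_eq_zero hc (hcS s hs))
    simp [hbumps]
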